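/- arXiv:1806.05878 — 5 statements merged into one kernel-verified Lean document; each statement's English description precedes it below -/
import Mathlib

section
/- Let n ≥ 1, k = 2 (so q = 4 and ζ = i), and let f : 𝔽₂ⁿ → ℤ₄ be a generalized Boolean function. Suppose u ∈ 𝔽₂ⁿ satisfies |H_f(u)| = 2^{m/2}·ℓ for some odd integer m ≥ 1 and some odd integer ℓ ≥ 1. Then there exist integers ℓ₁, ℓ₂ with ℓ₁² + ℓ₂² = ℓ² such that H_f(u) = 2^{(m−1)/2}·((ℓ₁ + ℓ₂) + (ℓ₁ − ℓ₂)·i). (In particular, if ℓ² is not a sum of two nonzero squares this forces H_f(u) = 2^{(m−1)/2}·ℓ·(±1 ± i).) -/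
open scoped BigOperators

/-- The primitive `q`-th complex root of unity `ζ_q = e^{2πi/q}`. -/
noncomputable def zetaQ (q : ℕ) : ℂ := Complex.exp (2 * Real.pi * Complex.I / q)

/-- The generalized Walsh–Hadamard transform of `f : 𝔽₂ⁿ → ℤ_q`. -/
noncomputable def gWHT {n : ℕ} (q : ℕ) (f : (Fin n → ZMod 2) → ZMod q)
    (u : Fin n → ZMod 2) : ℂ :=
  ∑ x : Fin n → ZMod 2, zetaQ q ^ (f x).val * (-1 : ℂ) ^ (∑ i, (u i * x i).val)

/-- The Walsh–Hadamard transform of a Boolean function `g : 𝔽₂ⁿ → 𝔽₂`. -/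
noncomputable def bWHT {n : ℕ} (g : (Fin n → ZMod 2) → ZMod 2)
    (u : Fin n → ZMod 2) : ℂ :=
  ∑ x : Fin n → ZMod 2, (-1 : ℂ) ^ (g x + ∑ i, u i * x i).val

/-- The `i`-th binary digit `a_i` of a function `f : 𝔽₂ⁿ → ℤ_{2^k}`. -/
def digit {n q : ℕ} (f : (Fin n → ZMod 2) → ZMod q) (i : ℕ)
    (x : Fin n → ZMod 2) : ZMod 2 :=
  (((f x).val / 2 ^ i : ℕ) : ZMod 2)

/-- The component function `f_c = c_0 a_0 ⊕ ⋯ ⊕ c_{k-2} a_{k-2} ⊕ a_{k-1}`. -/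
def comp {n k : ℕ} (f : (Fin n → ZMod 2) → ZMod (2 ^ k)) (c : Fin (k - 1) → ZMod 2)
    (x : Fin n → ZMod 2) : ZMod 2 :=
  (∑ j : Fin (k - 1), c j * digit f (j : ℕ) x) + digit f (k - 1) x

/-- The canonical bijection `ι : 𝔽₂^m → ℤ_{2^m}`. -/
def iotaF {m : ℕ} (d : Fin m → ZMod 2) : ZMod (2 ^ m) :=
  ∑ j : Fin m, ((d j).val : ZMod (2 ^ m)) * 2 ^ (j : ℕ)

/-- The inverse `ι⁻¹ : ℤ_{2^m} → 𝔽₂^m` of the canonical bijection. -/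
def invIota {m : ℕ} (g : ZMod (2 ^ m)) : Fin m → ZMod 2 :=
  fun j => ((g.val / 2 ^ (j : ℕ) : ℕ) : ZMod 2)

/-!
Since `ζ₄ = i`, `H_f(u)` is a Gaussian integer `A + B i`, and the hypothesis on its modulus
reads `A² + B² = 2^m ℓ²`. A sum of two squares divisible by `4` has both terms even, so for
`m = 2r + 1` one can pull `2^r` out of `A` and `B`, leaving `a² + b² = 2ℓ²`. Then `a ≡ b (mod 2)`,
and `ℓ₁ = (a + b)/2`, `ℓ₂ = (a - b)/2` satisfy `ℓ₁² + ℓ₂² = ℓ²`.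
-/

open Complex

lemma zetaQ_four : zetaQ 4 = I := by
  have h : 2 * (Real.pi : ℂ) * I / ((4 : ℕ) : ℂ) = (Real.pi / 2 : ℝ) * I := by
    push_cast; ring
  rw [zetaQ, h, exp_mul_I, ← ofReal_cos, ← ofReal_sin, Real.cos_pi_div_two,
    Real.sin_pi_div_two]
  simp

lemma gWHT_four_mem_range_toComplex {n : ℕ} (f : (Fin n → ZMod 2) → ZMod 4)
    (u : Fin n → ZMod 2) : gWHT 4 f u ∈ GaussianInt.toComplex.range := by
  have hI : I ∈ GaussianInt.toComplex.range := ⟨⟨0, 1⟩, by simp [GaussianInt.toComplex_def']⟩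
  rw [gWHT, zetaQ_four]
  exact Subring.sum_mem _ fun x _ =>
    mul_mem (pow_mem hI _) (pow_mem (neg_mem (one_mem _)) _)

lemma exists_int_gWHT_four_eq {n : ℕ} (f : (Fin n → ZMod 2) → ZMod 4)
    (u : Fin n → ZMod 2) : ∃ A B : ℤ, gWHT 4 f u = A + B * I := by
  obtain ⟨z, hz⟩ := gWHT_four_mem_range_toComplex f u
  exact ⟨z.re, z.im, by rw [← hz, GaussianInt.toComplex_def]⟩

lemma sq_add_sq_eq_of_norm_eq (A B : ℤ) (m : ℕ) (c : ℝ)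
    (h : ‖(A : ℂ) + B * I‖ = 2 ^ ((m : ℝ) / 2) * c) :
    A ^ 2 + B ^ 2 = 2 ^ m * c ^ 2 := by
  have h2m : ((2 : ℝ) ^ ((m : ℝ) / 2)) ^ 2 = 2 ^ m := by
    rw [← Real.rpow_mul_natCast zero_le_two, Nat.cast_ofNat, div_mul_cancel₀ _ two_ne_zero,
      Real.rpow_natCast]
  have hnorm : ‖(A : ℂ) + B * I‖ ^ 2 = A ^ 2 + B ^ 2 := by
    rw [Complex.sq_norm, ← ofReal_intCast, ← ofReal_intCast, normSq_add_mul_I]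
  rw [← hnorm, h, mul_pow, h2m]

lemma Int.two_dvd_of_four_dvd_sq_add_sq {A B : ℤ} (h : 4 ∣ A ^ 2 + B ^ 2) :
    2 ∣ A ∧ 2 ∣ B := by
  have four_dvd_sq_of_even {x : ℤ} (hx : Even x) : 4 ∣ x ^ 2 := by
    obtain ⟨y, rfl⟩ := hx
    exact ⟨y ^ 2, by ring⟩
  rcases Int.even_or_odd A with hA | hA <;> rcases Int.even_or_odd B with hB | hB
  · exact ⟨even_iff_two_dvd.mp hA, even_iff_two_dvd.mp hB⟩
  all_goals exfalso
  · have := Int.sq_mod_four_eq_one_of_odd hB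
    have := four_dvd_sq_of_even hA
    omega
  · have := Int.sq_mod_four_eq_one_of_odd hA
    have := four_dvd_sq_of_even hB
    omega
  · have := Int.sq_mod_four_eq_one_of_odd hA
    have := Int.sq_mod_four_eq_one_of_odd hB
    omega

lemma Int.exists_eq_two_pow_mul_of_sq_add_sq_eq (j : ℕ) {A B c : ℤ}
    (h : A ^ 2 + B ^ 2 = 2 ^ (2 * j + 1) * c) :
    ∃ a b : ℤ, A = 2 ^ j * a ∧ B = 2 ^ j * b ∧ a ^ 2 + b ^ 2 = 2 * c := by
  induction j generalizing A B with
  | zero => exact ⟨A, B, by ring, by ring, by linear_combination h⟩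
  | succ j ih =>
    have h4 : 4 ∣ A ^ 2 + B ^ 2 := ⟨2 ^ (2 * j + 1) * c, by rw [h]; ring⟩
    obtain ⟨⟨A', rfl⟩, ⟨B', rfl⟩⟩ := Int.two_dvd_of_four_dvd_sq_add_sq h4
    obtain ⟨a, b, rfl, rfl, hab⟩ := @ih A' B' <|
      mul_left_cancel₀ four_ne_zero (by linear_combination h)
    exact ⟨a, b, by ring, by ring, hab⟩

lemma Int.exists_add_sub_of_sq_add_sq_eq_two_mul {a b c : ℤ} (h : a ^ 2 + b ^ 2 = 2 * c) :
    ∃ l₁ l₂ : ℤ, a = l₁ + l₂ ∧ b = l₁ - l₂ ∧ l₁ ^ 2 + l₂ ^ 2 = c := by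
  have hsq : Even (a ^ 2 + b ^ 2) := ⟨c, by rw [h]; ring⟩
  obtain ⟨t, ht⟩ : Even (a + b) := by
    simpa [Int.even_add, Int.even_pow] using hsq
  obtain rfl : b = t + t - a := by linarith
  exact ⟨t, a - t, by ring, by ring, mul_left_cancel₀ two_ne_zero (by linear_combination h)⟩

theorem stmt1_general (n : ℕ)
    (f : (Fin n → ZMod 2) → ZMod 4) (u : Fin n → ZMod 2)
    (m ℓ : ℕ) (hm : Odd m)
    (habs : ‖gWHT 4 f u‖ = (2 : ℝ) ^ ((m : ℝ) / 2) * ℓ) :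
    ∃ l1 l2 : ℤ, l1 ^ 2 + l2 ^ 2 = (ℓ : ℤ) ^ 2 ∧
      gWHT 4 f u = (2 : ℂ) ^ ((m - 1) / 2) *
        (((l1 + l2 : ℤ) : ℂ) + ((l1 - l2 : ℤ) : ℂ) * Complex.I) := by
  obtain ⟨A, B, hH⟩ := exists_int_gWHT_four_eq f u
  obtain ⟨r, rfl⟩ := hm
  have hsq : A ^ 2 + B ^ 2 = 2 ^ (2 * r + 1) * (ℓ : ℤ) ^ 2 := by
    exact_mod_cast sq_add_sq_eq_of_norm_eq A B _ ℓ (hH ▸ habs)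
  obtain ⟨a, b, rfl, rfl, hab⟩ := Int.exists_eq_two_pow_mul_of_sq_add_sq_eq r hsq
  obtain ⟨l₁, l₂, rfl, rfl, hl⟩ := Int.exists_add_sub_of_sq_add_sq_eq_two_mul hab
  refine ⟨l₁, l₂, hl, ?_⟩
  rw [hH, show (2 * r + 1 - 1) / 2 = r by omega]
  push_cast
  ring

/-- Theorem 2, case `m` odd and `k = 2`: if `|H_f(u)| = 2^{m/2}·ℓ` with
`m, ℓ` odd, then `H_f(u) = 2^{(m-1)/2}·((ℓ₁+ℓ₂) + (ℓ₁−ℓ₂)·i)` for some integers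
`ℓ₁, ℓ₂` with `ℓ₁² + ℓ₂² = ℓ²`. -/
theorem stmt1 (n : ℕ) (hn : 1 ≤ n)
    (f : (Fin n → ZMod 2) → ZMod 4) (u : Fin n → ZMod 2)
    (m ℓ : ℕ) (hm : Odd m) (hm1 : 1 ≤ m) (hℓ : Odd ℓ) (hℓ1 : 1 ≤ ℓ)
    (habs : ‖gWHT 4 f u‖ = (2 : ℝ) ^ ((m : ℝ) / 2) * ℓ) :
    ∃ l1 l2 : ℤ, l1 ^ 2 + l2 ^ 2 = (ℓ : ℤ) ^ 2 ∧
      gWHT 4 f u = (2 : ℂ) ^ ((m - 1) / 2) *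
        (((l1 + l2 : ℤ) : ℂ) + ((l1 - l2 : ℤ) : ℂ) * Complex.I) :=
  stmt1_general n f u m ℓ hm habs
end

section
/- Let n ≥ 1, k ≥ 1, q = 2^k, and let f : 𝔽₂ⁿ → ℤ_q be a generalized Boolean function. Then for every a ∈ 𝔽₂ⁿ, 2^{k−1}·H_f(a) = Σ_{(c,d) ∈ 𝔽₂^{k−1} × 𝔽₂^{k−1}} (−1)^{c·d} ζ^{ι(d)} W_{f_c}(a). -/
open scoped BigOperators

/-! Write `v = (f x).val` as `v = ι(b) + 2^(k-1) t` with `b ∈ 𝔽₂^(k-1)` its low binary digits and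
`t` its top digit. Since `ζ^(2^(k-1)) = -1`, `ζ^v = ζ^ι(b) (-1)^t`, while `(-1)^(f_c x) = (-1)^(c·b + t)`.
Summing `(-1)^(c·d) ζ^ι(d) (-1)^(c·b)` over `c` and `d`, orthogonality of the characters of
`𝔽₂^(k-1)` keeps only `d = b`, so the right-hand side of the theorem, before summing over `x`,
is `2^(k-1) ζ^(f x) (-1)^(a·x)`. -/

lemma neg_one_pow_eq_of_natCast_eq {R : Type*} [Ring R] {M N : ℕ} (h : (M : ZMod 2) = N) :
    (-1 : R) ^ M = (-1 : R) ^ N := by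
  rw [neg_one_pow_eq_pow_mod_two, neg_one_pow_eq_pow_mod_two (n := N),
    (ZMod.natCast_eq_natCast_iff' M N 2).1 h]

lemma sum_neg_one_pow_val_mul (e : ZMod 2) :
    ∑ s : ZMod 2, (-1 : ℂ) ^ (s * e).val = if e = 0 then 2 else 0 := by
  rw [show (Finset.univ : Finset (ZMod 2)) = {0, 1} from rfl, Finset.sum_pair zero_ne_one]
  obtain rfl | rfl : e = 0 ∨ e = 1 := by revert e; decide
  · norm_num
  · simp [ZMod.val_one]

section Orthogonality

variable {ι : Type*} [Fintype ι] [DecidableEq ι]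

lemma sum_neg_one_pow_dotProduct (e : ι → ZMod 2) :
    ∑ c : ι → ZMod 2, (-1 : ℂ) ^ (∑ i, (c i * e i).val) =
      if e = 0 then 2 ^ Fintype.card ι else 0 := by
  simp_rw [← Finset.prod_pow_eq_pow_sum]
  rw [← Fintype.prod_sum fun i (s : ZMod 2) => (-1 : ℂ) ^ (s * e i).val]
  simp_rw [sum_neg_one_pow_val_mul, Finset.prod_ite_zero, funext_iff]
  simp

lemma sum_sum_neg_one_pow_mul (g : (ι → ZMod 2) → ℂ) (b : ι → ZMod 2) :
    ∑ c : ι → ZMod 2, ∑ d : ι → ZMod 2,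
      (-1 : ℂ) ^ (∑ i, (c i * d i).val) * g d * (-1 : ℂ) ^ (∑ i, (c i * b i).val) =
    2 ^ Fintype.card ι * g b := by
  have hsign : ∀ c d : ι → ZMod 2,
      (-1 : ℂ) ^ (∑ i, (c i * d i).val) * (-1 : ℂ) ^ (∑ i, (c i * b i).val) =
        (-1 : ℂ) ^ (∑ i, (c i * (d + b) i).val) := by
    intro c d
    rw [← pow_add]
    apply neg_one_pow_eq_of_natCast_eq
    push_cast [ZMod.natCast_zmod_val]
    simp [mul_add, Finset.sum_add_distrib]
  calc _ = ∑ d, g d * ∑ c : ι → ZMod 2, (-1 : ℂ) ^ (∑ i, (c i * (d + b) i).val) := by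
        rw [Finset.sum_comm]
        simp_rw [Finset.mul_sum, ← hsign]
        ring_nf
    _ = ∑ d, if d = b then 2 ^ Fintype.card ι * g d else 0 := by
        simp_rw [sum_neg_one_pow_dotProduct, add_eq_zero_iff_eq_neg, ZModModule.neg_eq_self]
        simp [mul_comm]
    _ = _ := by simp

end Orthogonality

lemma sum_div_two_pow_mod_two_mul_two_pow (m v : ℕ) :
    ∑ j : Fin m, v / 2 ^ (j : ℕ) % 2 * 2 ^ (j : ℕ) = v % 2 ^ m := by
  induction m with
  | zero => simp [Nat.mod_one]
  | succ m ih =>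
    rw [Fin.sum_univ_castSucc, Nat.mod_pow_succ]
    simp only [Fin.val_castSucc, Fin.val_last, ih]
    ring

def binaryDigits (m v : ℕ) : Fin m → ZMod 2 := fun j => ((v / 2 ^ (j : ℕ) : ℕ) : ZMod 2)

lemma val_iotaF_binaryDigits (m v : ℕ) : (iotaF (binaryDigits m v)).val = v % 2 ^ m := by
  have h : iotaF (binaryDigits m v) = ((v % 2 ^ m : ℕ) : ZMod (2 ^ m)) := by
    rw [iotaF, ← sum_div_two_pow_mod_two_mul_two_pow m v]
    push_cast
    simp [binaryDigits, ZMod.val_natCast]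
  rw [h, ZMod.val_natCast, Nat.mod_mod]

lemma zetaQ_two_pow_succ_pow_two_pow (m : ℕ) : zetaQ (2 ^ (m + 1)) ^ 2 ^ m = -1 := by
  rw [zetaQ, ← Complex.exp_nat_mul, ← Complex.exp_pi_mul_I]
  congr 1
  push_cast
  field_simp
  ring

lemma zetaQ_two_pow_succ_pow (m v : ℕ) :
    zetaQ (2 ^ (m + 1)) ^ v =
      zetaQ (2 ^ (m + 1)) ^ (iotaF (binaryDigits m v)).val * (-1 : ℂ) ^ (v / 2 ^ m) := by
  conv_lhs => rw [← Nat.mod_add_div v (2 ^ m)]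
  rw [val_iotaF_binaryDigits, pow_add, pow_mul, zetaQ_two_pow_succ_pow_two_pow]

lemma two_pow_mul_zetaQ_pow_eq_sum (m v : ℕ) :
    2 ^ m * zetaQ (2 ^ (m + 1)) ^ v =
      ∑ c : Fin m → ZMod 2, ∑ d : Fin m → ZMod 2,
        (-1 : ℂ) ^ (∑ i, (c i * d i).val) * zetaQ (2 ^ (m + 1)) ^ (iotaF d).val *
          (-1 : ℂ) ^ ((∑ j, c j * binaryDigits m v j) + ((v / 2 ^ m : ℕ) : ZMod 2)).val := by
  have hsign : ∀ c : Fin m → ZMod 2,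
      (-1 : ℂ) ^ ((∑ j, c j * binaryDigits m v j) + ((v / 2 ^ m : ℕ) : ZMod 2)).val =
        (-1 : ℂ) ^ (∑ j, (c j * binaryDigits m v j).val) * (-1 : ℂ) ^ (v / 2 ^ m) := by
    intro c
    rw [← pow_add]
    apply neg_one_pow_eq_of_natCast_eq
    push_cast [ZMod.natCast_zmod_val]
    rfl
  have hinv := sum_sum_neg_one_pow_mul (fun d => zetaQ (2 ^ (m + 1)) ^ (iotaF d).val)
    (binaryDigits m v)
  beta_reduce at hinv
  rw [Fintype.card_fin] at hinv
  rw [zetaQ_two_pow_succ_pow m v, ← mul_assoc, ← hinv]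
  simp_rw [Finset.sum_mul, hsign, mul_assoc]

lemma bWHT_eq_sum {n : ℕ} (g : (Fin n → ZMod 2) → ZMod 2) (a : Fin n → ZMod 2) :
    bWHT g a = ∑ x, (-1 : ℂ) ^ (g x).val * (-1 : ℂ) ^ (∑ i, (a i * x i).val) := by
  refine Finset.sum_congr rfl fun x _ => ?_
  rw [← pow_add]
  apply neg_one_pow_eq_of_natCast_eq
  push_cast [ZMod.natCast_zmod_val]
  rfl

theorem stmt2_general (n k : ℕ) (hk : 1 ≤ k)
    (f : (Fin n → ZMod 2) → ZMod (2 ^ k)) (a : Fin n → ZMod 2) :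
    (2 : ℂ) ^ (k - 1) * gWHT (2 ^ k) f a =
      ∑ c : Fin (k - 1) → ZMod 2, ∑ d : Fin (k - 1) → ZMod 2,
        (-1 : ℂ) ^ (∑ i, (c i * d i).val) * zetaQ (2 ^ k) ^ (iotaF d).val *
          bWHT (comp f c) a := by
  obtain ⟨m, rfl⟩ : ∃ m, k = m + 1 := ⟨k - 1, by omega⟩
  -- `digit f j x` is definitionally `binaryDigits m (f x).val j`
  have hpoint : ∀ x, (2 : ℂ) ^ m * zetaQ (2 ^ (m + 1)) ^ (f x).val =
      ∑ c : Fin m → ZMod 2, ∑ d : Fin m → ZMod 2,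
        (-1 : ℂ) ^ (∑ i, (c i * d i).val) * zetaQ (2 ^ (m + 1)) ^ (iotaF d).val *
          (-1 : ℂ) ^ (comp f c x).val := fun x => two_pow_mul_zetaQ_pow_eq_sum m (f x).val
  simp_rw [gWHT, bWHT_eq_sum, Finset.mul_sum, ← mul_assoc, Nat.add_sub_cancel, hpoint,
    Finset.sum_mul]
  rw [Finset.sum_comm]
  exact Finset.sum_congr rfl fun c _ => Finset.sum_comm

/-- Lemma 4: `2^{k-1}·H_f(a) = Σ_{(c,d)} (−1)^{c·d} ζ^{ι(d)} W_{f_c}(a)`. -/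
theorem stmt2 (n k : ℕ) (hn : 1 ≤ n) (hk : 1 ≤ k)
    (f : (Fin n → ZMod 2) → ZMod (2 ^ k)) (a : Fin n → ZMod 2) :
    (2 : ℂ) ^ (k - 1) * gWHT (2 ^ k) f a =
      ∑ c : Fin (k - 1) → ZMod 2, ∑ d : Fin (k - 1) → ZMod 2,
        (-1 : ℂ) ^ (∑ i, (c i * d i).val) * zetaQ (2 ^ k) ^ (iotaF d).val *
          bWHT (comp f c) a :=
  stmt2_general n k hk f a
end

section
/- Let n ≥ 1, k ≥ 2, q = 2^k, and let f : 𝔽₂ⁿ → ℤ_q be a generalized Boolean function. For every fixed a ∈ 𝔽₂ⁿ: H_f(a) = 0 if and only if W_{f_c}(a) = 0 for every c ∈ 𝔽₂^{k−1}. -/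
open scoped BigOperators

/-!
Write `k = m + 1` and `f x = ι(a_0(x), …, a_{m-1}(x)) + 2^m a_m(x)`, and group the points `x`
by their low digits `d ∈ 𝔽₂^m`. Since `ζ^{2^m} = -1`, both transforms are combinations of the
same integers `M(d) = ∑_{x : (a_0, …, a_{m-1})(x) = d} (-1)^{a_m(x) + a·x}`:
`H_f(a) = ∑_d ζ^{ι(d)} M(d)` and `W_{f_c}(a) = ∑_d (-1)^{c·d} M(d)`.
The first vanishes iff every `M(d)` does, because `ι(d) < 2^m = φ(2^{m+1})` and the powers of `ζ`
below the degree of its minimal polynomial (the cyclotomic polynomial) are linearly independent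
over `ℚ`. The second vanishes for all `c` iff every `M(d)` does, by orthogonality of the
characters `d ↦ (-1)^{c·d}` of `𝔽₂^m`.
-/

open Finset

theorem IsPrimitiveRoot.linearIndependent_pow_totient {K : Type*} [Field K] [CharZero K]
    {ζ : K} {n : ℕ} (hζ : IsPrimitiveRoot ζ n) (hn : 0 < n) :
    LinearIndependent ℚ fun i : Fin n.totient => ζ ^ (i : ℕ) := by
  have hdeg : (minpoly ℚ ζ).natDegree = n.totient := by
    rw [← Polynomial.cyclotomic_eq_minpoly_rat hζ hn, Polynomial.natDegree_cyclotomic]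
  exact hdeg ▸ linearIndependent_pow ζ

theorem IsPrimitiveRoot.pow_two_pow_eq_neg_one {R : Type*} [CommRing R] [IsDomain R]
    {ζ : R} {m : ℕ} (hζ : IsPrimitiveRoot ζ (2 ^ (m + 1))) : ζ ^ 2 ^ m = -1 := by
  have h2 : IsPrimitiveRoot (ζ ^ 2 ^ m) 2 := by
    simpa [pow_succ] using hζ.pow_of_dvd (by positivity) (pow_dvd_pow 2 m.le_succ)
  exact h2.eq_neg_one_of_two_right

theorem Nat.totient_two_pow_succ (m : ℕ) : (2 ^ (m + 1)).totient = 2 ^ m := by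
  rw [Nat.totient_prime_pow Nat.prime_two m.succ_pos]
  simp

theorem sum_comp_mul_eq_sum_mul_sum_fiber {ι κ R : Type*} [Fintype ι] [Fintype κ] [DecidableEq κ]
    [NonUnitalNonAssocSemiring R] (g : ι → κ) (F : κ → R) (s : ι → R) :
    ∑ i, F (g i) * s i = ∑ j, F j * ∑ i with g i = j, s i := by
  rw [← sum_fiberwise univ g]
  refine sum_congr rfl fun j _ => ?_
  rw [mul_sum]
  exact sum_congr rfl fun i hi => by rw [(mem_filter.mp hi).2]

theorem isPrimitiveRoot_zetaQ {q : ℕ} (hq : q ≠ 0) : IsPrimitiveRoot (zetaQ q) q :=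
  Complex.isPrimitiveRoot_exp q hq

noncomputable def signChar : AddChar (ZMod 2) ℂ :=
  AddChar.zmodChar 2 (by norm_num : (-1 : ℂ) ^ 2 = 1)

theorem signChar_apply (z : ZMod 2) : signChar z = (-1) ^ z.val := rfl

theorem signChar_natCast (N : ℕ) : signChar N = (-1) ^ N := by
  rw [signChar_apply, ZMod.val_natCast, ← neg_one_pow_eq_pow_mod_two]

theorem AddChar.map_sum_eq_prod {A M ι : Type*} [AddCommMonoid A] [CommMonoid M]
    (ψ : AddChar A M) (s : Finset ι) (f : ι → A) : ψ (∑ i ∈ s, f i) = ∏ i ∈ s, ψ (f i) :=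
  map_prod ψ.toMonoidHom (fun i => Multiplicative.ofAdd (f i)) s

theorem sum_signChar_mul (t : ZMod 2) :
    ∑ b : ZMod 2, signChar (b * t) = if t = 0 then 2 else 0 := by
  rw [show (univ : Finset (ZMod 2)) = {0, 1} by decide, sum_pair zero_ne_one]
  obtain rfl | rfl : t = 0 ∨ t = 1 := by revert t; decide
  · norm_num [signChar_apply]
  · norm_num [signChar_apply, ZMod.val_one]

theorem sum_signChar_dotProduct_mul {ι : Type*} [Fintype ι] [DecidableEq ι] (d e : ι → ZMod 2) :
    ∑ c : ι → ZMod 2, signChar (c ⬝ᵥ d) * signChar (c ⬝ᵥ e)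
      = if d = e then 2 ^ Fintype.card ι else 0 := by
  have hprod : ∀ c : ι → ZMod 2, signChar (c ⬝ᵥ d) * signChar (c ⬝ᵥ e)
      = ∏ j, signChar (c j * (d + e) j) := fun c => by
    rw [← AddChar.map_add_eq_mul, ← dotProduct_add, dotProduct, AddChar.map_sum_eq_prod]
  have hde : (∀ j, (d + e) j = 0) ↔ d = e := by
    simp only [Pi.add_apply, funext_iff, CharTwo.add_eq_zero]
  simp_rw [hprod, ← Fintype.prod_sum (fun j b => signChar (b * (d + e) j)), sum_signChar_mul,
    Fintype.prod_ite_zero, hde, prod_const, card_univ]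

theorem eq_zero_of_forall_sum_signChar_dotProduct_mul_eq_zero {ι : Type*} [Fintype ι]
    [DecidableEq ι] {M : (ι → ZMod 2) → ℂ} (hM : ∀ c, ∑ d, signChar (c ⬝ᵥ d) * M d = 0)
    (e : ι → ZMod 2) : M e = 0 := by
  have h : (2 : ℂ) ^ Fintype.card ι * M e = 0 := calc
    (2 : ℂ) ^ Fintype.card ι * M e
        = ∑ d, (∑ c, signChar (c ⬝ᵥ e) * signChar (c ⬝ᵥ d)) * M d := by
          simp_rw [sum_signChar_dotProduct_mul, ite_mul, zero_mul, sum_ite_eq, mem_univ, if_true]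
    _ = ∑ c, signChar (c ⬝ᵥ e) * ∑ d, signChar (c ⬝ᵥ d) * M d := by
          simp_rw [sum_mul, mul_sum, mul_assoc]
          exact sum_comm
    _ = 0 := by simp [hM]
  simpa using h

/-- Binary expansion; `binaryEquiv m d` is `iotaF d` read as a natural number. -/
def binaryEquiv (m : ℕ) : (Fin m → ZMod 2) ≃ Fin (2 ^ m) := finFunctionFinEquiv

theorem binaryEquiv_apply {m : ℕ} (d : Fin m → ZMod 2) :
    (binaryEquiv m d : ℕ) = ∑ j, (d j).val * 2 ^ (j : ℕ) := finFunctionFinEquiv_apply _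

theorem binaryEquiv_digits {m v : ℕ} (hv : v < 2 ^ m) :
    (binaryEquiv m fun j => ((v / 2 ^ (j : ℕ) : ℕ) : ZMod 2) : ℕ) = v := by
  have hdigits :
      (fun j : Fin m => ((v / 2 ^ (j : ℕ) : ℕ) : ZMod 2)) = (binaryEquiv m).symm ⟨v, hv⟩ := rfl
  rw [hdigits, Equiv.apply_symm_apply]

theorem eq_zero_of_sum_pow_binaryEquiv_mul_eq_zero {K : Type*} [Field K] [CharZero K] {ζ : K}
    {m : ℕ} (hζ : IsPrimitiveRoot ζ (2 ^ (m + 1))) {M : (Fin m → ZMod 2) → ℤ}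
    (hM : ∑ d, ζ ^ (binaryEquiv m d : ℕ) * (M d : K) = 0) (d : Fin m → ZMod 2) : M d = 0 := by
  have hli : LinearIndependent ℚ fun d : Fin m → ZMod 2 => ζ ^ (binaryEquiv m d : ℕ) :=
    (hζ.linearIndependent_pow_totient (by positivity)).comp
      (finCongr (Nat.totient_two_pow_succ m).symm ∘ binaryEquiv m)
      ((finCongr _).injective.comp (binaryEquiv m).injective)
  have := Fintype.linearIndependent_iff.mp hli (fun d => (M d : ℚ)) (by
    simpa [Rat.smul_def, mul_comm] using hM) d
  exact_mod_cast this

section Transforms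

variable {n : ℕ}

def lowDigits (m : ℕ) {q : ℕ} (f : (Fin n → ZMod 2) → ZMod q) (x : Fin n → ZMod 2) :
    Fin m → ZMod 2 :=
  fun j => digit f j x

def fiberSignSum (m : ℕ) {q : ℕ} (f : (Fin n → ZMod 2) → ZMod q) (a : Fin n → ZMod 2)
    (d : Fin m → ZMod 2) : ℤ :=
  ∑ x with lowDigits m f x = d, (-1) ^ (digit f m x + a ⬝ᵥ x).val

variable {m : ℕ} (f : (Fin n → ZMod 2) → ZMod (2 ^ (m + 1))) (a : Fin n → ZMod 2)

theorem val_eq_binaryEquiv_lowDigits_add (x : Fin n → ZMod 2) :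
    (f x).val = binaryEquiv m (lowDigits m f x) + (digit f m x).val * 2 ^ m := by
  conv_lhs => rw [← binaryEquiv_digits (ZMod.val_lt (f x))]
  rw [binaryEquiv_apply, Fin.sum_univ_castSucc, binaryEquiv_apply]
  rfl

theorem sum_mul_signChar_eq_sum_fiberSignSum (F : (Fin m → ZMod 2) → ℂ) :
    ∑ x, F (lowDigits m f x) * signChar (digit f m x + a ⬝ᵥ x)
      = ∑ d, F d * fiberSignSum m f a d := by
  rw [sum_comp_mul_eq_sum_mul_sum_fiber]
  simp [fiberSignSum, signChar_apply]

theorem gWHT_eq_sum_fiberSignSum :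
    gWHT (2 ^ (m + 1)) f a
      = ∑ d, zetaQ (2 ^ (m + 1)) ^ (binaryEquiv m d : ℕ) * fiberSignSum m f a d := by
  have hζ := (isPrimitiveRoot_zetaQ (by positivity : 2 ^ (m + 1) ≠ 0)).pow_two_pow_eq_neg_one
  rw [← sum_mul_signChar_eq_sum_fiberSignSum f a]
  refine sum_congr rfl fun x _ => ?_
  have hlin : (-1 : ℂ) ^ (∑ i, (a i * x i).val) = signChar (a ⬝ᵥ x) := by
    rw [← signChar_natCast]
    simp [dotProduct]
  rw [val_eq_binaryEquiv_lowDigits_add f x, pow_add, mul_comm _ (2 ^ m), pow_mul, hζ, mul_assoc,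
    hlin, AddChar.map_add_eq_mul]
  rfl

theorem bWHT_comp_eq_sum_fiberSignSum (c : Fin m → ZMod 2) :
    bWHT (comp f c) a = ∑ d, signChar (c ⬝ᵥ d) * fiberSignSum m f a d := by
  rw [← sum_mul_signChar_eq_sum_fiberSignSum f a, bWHT]
  refine sum_congr rfl fun x _ => ?_
  rw [← AddChar.map_add_eq_mul, ← add_assoc]
  rfl

end Transforms

theorem stmt3_general (n k : ℕ) (hk : 2 ≤ k)
    (f : (Fin n → ZMod 2) → ZMod (2 ^ k)) (a : Fin n → ZMod 2) :
    gWHT (2 ^ k) f a = 0 ↔ ∀ c : Fin (k - 1) → ZMod 2, bWHT (comp f c) a = 0 := by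
  obtain ⟨m, rfl⟩ : ∃ m, k = m + 1 := ⟨k - 1, by omega⟩
  have hζ := isPrimitiveRoot_zetaQ (by positivity : 2 ^ (m + 1) ≠ 0)
  simp only [gWHT_eq_sum_fiberSignSum, bWHT_comp_eq_sum_fiberSignSum]
  constructor
  · intro hH c
    simp [eq_zero_of_sum_pow_binaryEquiv_mul_eq_zero hζ hH]
  · intro hW
    have hM d : (fiberSignSum m f a d : ℂ) = 0 :=
      eq_zero_of_forall_sum_signChar_dotProduct_mul_eq_zero hW d
    simp [hM]

/-- Theorem 5(i): `H_f(a) = 0` iff all component transforms vanish at `a`. -/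
theorem stmt3 (n k : ℕ) (hn : 1 ≤ n) (hk : 2 ≤ k)
    (f : (Fin n → ZMod 2) → ZMod (2 ^ k)) (a : Fin n → ZMod 2) :
    gWHT (2 ^ k) f a = 0 ↔ ∀ c : Fin (k - 1) → ZMod 2, bWHT (comp f c) a = 0 :=
  stmt3_general n k hk f a
end

section
/- Let n ≥ 1, k ≥ 1, q = 2^k, a ∈ {0,1}, and let f : 𝔽₂ⁿ → ℤ_q be an s-plateaued generalized Boolean function for some integer s ≥ 0. Then g : 𝔽₂ⁿ × 𝔽₂ → ℤ_q defined by g(x,y) = f(x) + 2^{k−1}·a·y is an (s+1)-plateaued generalized Boolean function on n+1 variables. In particular, if f is generalized bent then g is 1-plateaued. -/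
open scoped BigOperators

/-- Generalized Walsh–Hadamard transform for a function on `𝔽₂ⁿ × 𝔽₂`. -/
noncomputable def gWHTx {n : ℕ} (q : ℕ) (g : (Fin n → ZMod 2) → ZMod 2 → ZMod q)
    (u : Fin n → ZMod 2) (v : ZMod 2) : ℂ :=
  ∑ x : Fin n → ZMod 2, ∑ y : ZMod 2,
    zetaQ q ^ (g x y).val * (-1 : ℂ) ^ ((∑ i, (u i * x i).val) + (v * y).val)

/-! Summing over the last variable factors the transform:
`H_g(u, v) = H_f(u) · (1 + (-1)^(a + v))`, because `ζ^(2^(k-1)) = -1`. The second factor is `0`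
or `2`, so `|H_g|` takes the values `0` and `2 · 2^((n+s)/2) = 2^(((n+1)+(s+1))/2)`. -/

lemma zetaQ_pow_self {q : ℕ} (hq : q ≠ 0) : zetaQ q ^ q = 1 := by
  rw [zetaQ, ← Complex.exp_nat_mul, mul_div_cancel₀ _ (Nat.cast_ne_zero.mpr hq)]
  exact Complex.exp_two_pi_mul_I

lemma zetaQ_pow_val_natCast {q : ℕ} [NeZero q] (m : ℕ) :
    zetaQ q ^ (m : ZMod q).val = zetaQ q ^ m := by
  rw [ZMod.val_natCast, ← pow_eq_pow_mod _ (zetaQ_pow_self (NeZero.ne q))]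

lemma zetaQ_pow_val_add {q : ℕ} [NeZero q] (s t : ZMod q) :
    zetaQ q ^ (s + t).val = zetaQ q ^ s.val * zetaQ q ^ t.val := by
  rw [ZMod.val_add, ← pow_eq_pow_mod _ (zetaQ_pow_self (NeZero.ne q)), pow_add]

lemma zetaQ_two_mul_pow_self {m : ℕ} (hm : m ≠ 0) : zetaQ (2 * m) ^ m = -1 := by
  rw [zetaQ, ← Complex.exp_nat_mul]
  convert Complex.exp_pi_mul_I using 2
  push_cast
  field_simp

lemma zetaQ_two_pow_pow_val_half_mul {k : ℕ} (hk : 1 ≤ k) (a : ZMod 2) :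
    zetaQ (2 ^ k) ^ (2 ^ (k - 1) * (a.val : ZMod (2 ^ k))).val = (-1) ^ a.val := by
  have hcast :
      2 ^ (k - 1) * (a.val : ZMod (2 ^ k)) = ((2 ^ (k - 1) * a.val : ℕ) : ZMod (2 ^ k)) := by
    push_cast; rfl
  obtain ⟨j, rfl⟩ : ∃ j, k = j + 1 := ⟨k - 1, by omega⟩
  rw [hcast, zetaQ_pow_val_natCast, pow_mul, Nat.add_sub_cancel, pow_succ',
    zetaQ_two_mul_pow_self (by positivity)]

lemma gWHTx_add_mul_val {n q : ℕ} [NeZero q] (f : (Fin n → ZMod 2) → ZMod q) (c : ZMod q)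
    (u : Fin n → ZMod 2) (v : ZMod 2) :
    gWHTx q (fun x y => f x + c * (y.val : ZMod q)) u v
      = gWHT q f u * (1 + zetaQ q ^ c.val * (-1) ^ v.val) := by
  rw [gWHTx, gWHT, Finset.sum_mul]
  refine Finset.sum_congr rfl fun x _ => ?_
  rw [show (Finset.univ : Finset (ZMod 2)) = {0, 1} from rfl, Finset.sum_pair zero_ne_one]
  simp only [ZMod.val_zero, ZMod.val_one, Nat.cast_zero, Nat.cast_one, mul_zero, mul_one,
    add_zero, zetaQ_pow_val_add, pow_add]
  ring

lemma norm_one_add_neg_one_pow (m : ℕ) :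
    ‖1 + (-1 : ℂ) ^ m‖ = 0 ∨ ‖1 + (-1 : ℂ) ^ m‖ = 2 := by
  rcases Nat.even_or_odd m with hm | hm
  · right; rw [hm.neg_one_pow]; norm_num
  · left; rw [hm.neg_one_pow]; norm_num

lemma norm_gWHTx_add_half_mul_val {n k : ℕ} (hk : 1 ≤ k) (a : ZMod 2)
    (f : (Fin n → ZMod 2) → ZMod (2 ^ k)) (r : ℝ)
    (hf : ∀ u, ‖gWHT (2 ^ k) f u‖ = 0 ∨ ‖gWHT (2 ^ k) f u‖ = r)
    (u : Fin n → ZMod 2) (v : ZMod 2) :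
    ‖gWHTx (2 ^ k)
        (fun x y => f x + 2 ^ (k - 1) * (a.val : ZMod (2 ^ k)) * (y.val : ZMod (2 ^ k))) u v‖
      = 0 ∨
    ‖gWHTx (2 ^ k)
        (fun x y => f x + 2 ^ (k - 1) * (a.val : ZMod (2 ^ k)) * (y.val : ZMod (2 ^ k))) u v‖
      = 2 * r := by
  rw [gWHTx_add_mul_val, zetaQ_two_pow_pow_val_half_mul hk, ← pow_add, norm_mul]
  rcases norm_one_add_neg_one_pow (a.val + v.val) with h | h
  · exact Or.inl (by rw [h, mul_zero])
  · rcases hf u with hu | hu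
    · exact Or.inl (by rw [hu, zero_mul])
    · exact Or.inr (by rw [hu, h, mul_comm])

lemma two_mul_two_rpow_half (m : ℕ) :
    2 * (2 : ℝ) ^ ((m : ℝ) / 2) = (2 : ℝ) ^ (((m + 2 : ℕ) : ℝ) / 2) := by
  rw [show ((m + 2 : ℕ) : ℝ) / 2 = (m : ℝ) / 2 + 1 by push_cast; ring,
    Real.rpow_add two_pos, Real.rpow_one, mul_comm]

theorem stmt9_general (n k s : ℕ) (hk : 1 ≤ k) (a : ZMod 2)
    (f : (Fin n → ZMod 2) → ZMod (2 ^ k))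
    (hf : ∀ u, Norm.norm (gWHT (2 ^ k) f u) = 0 ∨
      Norm.norm (gWHT (2 ^ k) f u) = (2 : ℝ) ^ (((n + s : ℕ) : ℝ) / 2)) :
    (∀ (u : Fin n → ZMod 2) (v : ZMod 2),
      Norm.norm (gWHTx (2 ^ k)
          (fun x y => f x + 2 ^ (k - 1) * (a.val : ZMod (2 ^ k)) * (y.val : ZMod (2 ^ k)))
          u v) = 0 ∨
      Norm.norm (gWHTx (2 ^ k)
          (fun x y => f x + 2 ^ (k - 1) * (a.val : ZMod (2 ^ k)) * (y.val : ZMod (2 ^ k)))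
          u v) = (2 : ℝ) ^ ((((n + 1) + (s + 1) : ℕ) : ℝ) / 2)) ∧
    ((∀ u, Norm.norm (gWHT (2 ^ k) f u) = (2 : ℝ) ^ ((n : ℝ) / 2)) →
      ∀ (u : Fin n → ZMod 2) (v : ZMod 2),
        Norm.norm (gWHTx (2 ^ k)
            (fun x y => f x + 2 ^ (k - 1) * (a.val : ZMod (2 ^ k)) * (y.val : ZMod (2 ^ k)))
            u v) = 0 ∨
        Norm.norm (gWHTx (2 ^ k)
            (fun x y => f x + 2 ^ (k - 1) * (a.val : ZMod (2 ^ k)) * (y.val : ZMod (2 ^ k)))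
            u v) = (2 : ℝ) ^ ((((n + 1) + 1 : ℕ) : ℝ) / 2)) := by
  refine ⟨fun u v => ?_, fun hbent u v => ?_⟩
  · rw [show n + 1 + (s + 1) = n + s + 2 by omega, ← two_mul_two_rpow_half]
    exact norm_gWHTx_add_half_mul_val hk a f _ hf u v
  · rw [← two_mul_two_rpow_half]
    exact norm_gWHTx_add_half_mul_val hk a f _ (fun u => Or.inr (hbent u)) u v

/-- Proposition 7: if `f` is `s`-plateaued, then
`g(x,y) = f(x) + 2^{k-1}·a·y` is `(s+1)`-plateaued on `n+1` variables; in particular,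
if `f` is generalized bent then `g` is `1`-plateaued. -/
theorem stmt9 (n k s : ℕ) (hn : 1 ≤ n) (hk : 1 ≤ k) (a : ZMod 2)
    (f : (Fin n → ZMod 2) → ZMod (2 ^ k))
    (hf : ∀ u, Norm.norm (gWHT (2 ^ k) f u) = 0 ∨
      Norm.norm (gWHT (2 ^ k) f u) = (2 : ℝ) ^ (((n + s : ℕ) : ℝ) / 2)) :
    (∀ (u : Fin n → ZMod 2) (v : ZMod 2),
      Norm.norm (gWHTx (2 ^ k)
          (fun x y => f x + 2 ^ (k - 1) * (a.val : ZMod (2 ^ k)) * (y.val : ZMod (2 ^ k)))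
          u v) = 0 ∨
      Norm.norm (gWHTx (2 ^ k)
          (fun x y => f x + 2 ^ (k - 1) * (a.val : ZMod (2 ^ k)) * (y.val : ZMod (2 ^ k)))
          u v) = (2 : ℝ) ^ ((((n + 1) + (s + 1) : ℕ) : ℝ) / 2)) ∧
    ((∀ u, Norm.norm (gWHT (2 ^ k) f u) = (2 : ℝ) ^ ((n : ℝ) / 2)) →
      ∀ (u : Fin n → ZMod 2) (v : ZMod 2),
        Norm.norm (gWHTx (2 ^ k)
            (fun x y => f x + 2 ^ (k - 1) * (a.val : ZMod (2 ^ k)) * (y.val : ZMod (2 ^ k)))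
            u v) = 0 ∨
        Norm.norm (gWHTx (2 ^ k)
            (fun x y => f x + 2 ^ (k - 1) * (a.val : ZMod (2 ^ k)) * (y.val : ZMod (2 ^ k)))
            u v) = (2 : ℝ) ^ ((((n + 1) + 1 : ℕ) : ℝ) / 2)) :=
  stmt9_general n k s hk a f hf
end

section
/- Let n ≥ 1, k ≥ 2, q = 2^k, let s be an integer with 0 ≤ s ≤ n, and let f : 𝔽₂ⁿ → ℤ_q be a generalized Boolean function. Then f is s-plateaued if and only if for every x ∈ 𝔽₂ⁿ, Σ_{a,b ∈ 𝔽₂ⁿ} ζ^{D_b D_a f(x)} = 2^{n+s}. -/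
open scoped BigOperators

/-!
Write `F = ζ^f`, `W` for the Walsh transform and `H = W F = gWHT f`. Expanding `F (x + a + b)`
by Walsh inversion gives `2ⁿ Σ_{a,b} ζ^{D_b D_a f(x)} = F(x) · W(H H̄²)(x)`, while
`W(H̄)(x) = 2ⁿ F̄(x)`. So the condition on second derivatives says precisely that `H H̄²` and
`2^{n+s} H̄` have the same Walsh transform, i.e. that `H̄ (|H|² - 2^{n+s})` vanishes identically,
which is `s`-plateauedness.
-/

open Finset ComplexConjugate

section Walsh

variable {n : ℕ}

noncomputable def walsh (u x : Fin n → ZMod 2) : ℂ := (-1) ^ ∑ i, (u i * x i).val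

noncomputable def walshTransform (F : (Fin n → ZMod 2) → ℂ) (u : Fin n → ZMod 2) : ℂ :=
  ∑ x, F x * walsh u x

lemma neg_one_pow_val_add {R : Type*} [Ring R] (a b : ZMod 2) :
    (-1 : R) ^ (a + b).val = (-1) ^ a.val * (-1) ^ b.val := by
  rw [← pow_add, neg_one_pow_eq_pow_mod_two, ZMod.val_add, Nat.mod_mod,
    ← neg_one_pow_eq_pow_mod_two]

lemma walsh_comm (u x : Fin n → ZMod 2) : walsh u x = walsh x u := by
  simp only [walsh, mul_comm]

lemma walsh_add_right (u x y : Fin n → ZMod 2) :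
    walsh u (x + y) = walsh u x * walsh u y := by
  simp only [walsh, ← prod_pow_eq_pow_sum, ← prod_mul_distrib, Pi.add_apply, mul_add,
    neg_one_pow_val_add]

lemma walsh_mul_self (u x : Fin n → ZMod 2) : walsh u x * walsh u x = 1 := by
  rw [walsh, ← mul_pow]
  simp

lemma conj_walsh (u x : Fin n → ZMod 2) : conj (walsh u x) = walsh u x := by
  simp [walsh]

lemma sum_walsh (u : Fin n → ZMod 2) :
    ∑ x, walsh u x = if u = 0 then (2 : ℂ) ^ n else 0 := by
  have hcoord (t : ZMod 2) : ∑ y : ZMod 2, (-1 : ℂ) ^ (t * y).val = if t = 0 then 2 else 0 := by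
    obtain rfl | rfl : t = 0 ∨ t = 1 := by decide +revert
    all_goals simp [show ∀ g : ZMod 2 → ℂ, ∑ y, g y = g 0 + g 1 from Fin.sum_univ_two,
      ZMod.val_one, one_add_one_eq_two]
  simp only [walsh, ← prod_pow_eq_pow_sum]
  rw [← Fintype.prod_sum (fun i y => (-1 : ℂ) ^ (u i * y).val)]
  simp only [hcoord, Fintype.prod_ite_zero, prod_const, card_univ, Fintype.card_fin, funext_iff,
    Pi.zero_apply]

lemma sum_walsh_mul_walsh (x y : Fin n → ZMod 2) :
    ∑ u, walsh u x * walsh u y = if x = y then (2 : ℂ) ^ n else 0 := by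
  have hneg : -y = y := funext fun i => ZMod.neg_eq_self_mod_two (y i)
  simp only [← walsh_add_right, walsh_comm _ (x + y), sum_walsh, add_eq_zero_iff_eq_neg, hneg]

lemma walshTransform_walshTransform (F : (Fin n → ZMod 2) → ℂ) (x : Fin n → ZMod 2) :
    walshTransform (walshTransform F) x = 2 ^ n * F x := by
  simp only [walshTransform, sum_mul, walsh_comm x, mul_assoc]
  rw [sum_comm]
  simp only [← mul_sum, sum_walsh_mul_walsh, mul_ite, mul_zero, sum_ite_eq, mem_univ,
    if_true, mul_comm]

lemma walshTransform_injective :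
    Function.Injective (walshTransform : ((Fin n → ZMod 2) → ℂ) → _) := by
  intro F G h
  funext x
  have hx := congrArg (walshTransform · x) h
  simp only [walshTransform_walshTransform] at hx
  exact mul_left_cancel₀ (pow_ne_zero n two_ne_zero) hx

lemma walshTransform_const_mul (c : ℂ) (F : (Fin n → ZMod 2) → ℂ) (u : Fin n → ZMod 2) :
    walshTransform (fun x => c * F x) u = c * walshTransform F u := by
  simp only [walshTransform, mul_assoc, mul_sum]

lemma conj_walshTransform (F : (Fin n → ZMod 2) → ℂ) (u : Fin n → ZMod 2) :
    conj (walshTransform F u) = walshTransform (fun x => conj (F x)) u := by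
  simp only [walshTransform, map_sum, map_mul, conj_walsh]

lemma sum_add_left_mul_walsh (F : (Fin n → ZMod 2) → ℂ) (u x : Fin n → ZMod 2) :
    ∑ a, F (x + a) * walsh u (x + a) = walshTransform F u :=
  Equiv.sum_comp (Equiv.addLeft x) fun y => F y * walsh u y

lemma walsh_add_add (u x a b : Fin n → ZMod 2) :
    walsh u (x + a + b) = walsh u (x + a) * walsh u (x + b) * walsh u x := by
  simp only [walsh_add_right]
  linear_combination (-(walsh u x * walsh u a * walsh u b)) * walsh_mul_self u x

lemma walshTransform_mul_conj_sq (F : (Fin n → ZMod 2) → ℂ) (x : Fin n → ZMod 2) :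
    walshTransform (fun u => walshTransform F u * conj (walshTransform F u) ^ 2) x
      = 2 ^ n * ∑ a, ∑ b, conj (F (x + a)) * conj (F (x + b)) * F (x + a + b) := by
  set H := walshTransform F
  have hconj (u : Fin n → ZMod 2) : conj (H u) = ∑ a, conj (F (x + a)) * walsh u (x + a) := by
    rw [conj_walshTransform]
    exact (sum_add_left_mul_walsh _ u x).symm
  have hinv (y : Fin n → ZMod 2) : ∑ u, H u * walsh u y = 2 ^ n * F y := by
    simp only [← walshTransform_walshTransform, walshTransform, walsh_comm y, H]
  calc walshTransform (fun u => H u * conj (H u) ^ 2) x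
      = ∑ u, H u * walsh u x * conj (H u) * conj (H u) := by
        rw [walshTransform]
        exact sum_congr rfl fun u _ => by rw [walsh_comm]; ring
    _ = ∑ u, ∑ a, ∑ b, conj (F (x + a)) * conj (F (x + b)) * (H u * walsh u (x + a + b)) := by
        refine sum_congr rfl fun u _ => ?_
        rw [hconj u, mul_assoc, sum_mul_sum, mul_sum]
        simp only [mul_sum, walsh_add_add]
        exact sum_congr rfl fun a _ => sum_congr rfl fun b _ => by ring
    _ = ∑ a, ∑ b, conj (F (x + a)) * conj (F (x + b)) * ∑ u, H u * walsh u (x + a + b) := by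
        rw [sum_comm]
        refine sum_congr rfl fun a _ => ?_
        rw [sum_comm]
        simp only [mul_sum]
    _ = 2 ^ n * ∑ a, ∑ b, conj (F (x + a)) * conj (F (x + b)) * F (x + a + b) := by
        simp only [hinv, mul_sum]
        exact sum_congr rfl fun a _ => sum_congr rfl fun b _ => by ring

end Walsh

lemma zetaQ_pow_val (q : ℕ) [NeZero q] (a : ZMod q) : zetaQ q ^ a.val = ZMod.stdAddChar a := by
  rw [ZMod.stdAddChar_apply, ZMod.toCircle_apply, zetaQ, ← Complex.exp_nat_mul]
  ring_nf

lemma norm_eq_zero_or_eq_iff_mul_conj_sq (z : ℂ) {r : ℝ} (hr : 0 ≤ r) :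
    (‖z‖ = 0 ∨ ‖z‖ = r) ↔ z * conj z ^ 2 = (r : ℂ) ^ 2 * conj z := by
  have hfactor : z * conj z ^ 2 - (r : ℂ) ^ 2 * conj z = ((‖z‖ : ℂ) ^ 2 - r ^ 2) * conj z := by
    rw [← Complex.mul_conj']
    ring
  rw [← sub_eq_zero (b := (r : ℂ) ^ 2 * conj z), hfactor, mul_eq_zero, map_eq_zero,
    ← norm_eq_zero (a := z), sub_eq_zero, ← Complex.ofReal_pow, ← Complex.ofReal_pow,
    Complex.ofReal_inj, sq_eq_sq₀ (norm_nonneg z) hr, or_comm]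

lemma ofReal_two_rpow_half_sq (m : ℕ) : (((2 : ℝ) ^ ((m : ℝ) / 2) : ℝ) : ℂ) ^ 2 = 2 ^ m := by
  rw [← Complex.ofReal_pow, ← Real.rpow_natCast, ← Real.rpow_mul zero_le_two, Nat.cast_ofNat,
    div_mul_cancel₀ _ two_ne_zero, Real.rpow_natCast]
  push_cast
  rfl

theorem stmt14_general (n k s : ℕ)
    (f : (Fin n → ZMod 2) → ZMod (2 ^ k)) :
    (∀ u, ‖gWHT (2 ^ k) f u‖ = 0 ∨
      ‖gWHT (2 ^ k) f u‖ = (2 : ℝ) ^ (((n + s : ℕ) : ℝ) / 2)) ↔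
    (∀ x : Fin n → ZMod 2,
      ∑ a : Fin n → ZMod 2, ∑ b : Fin n → ZMod 2,
        zetaQ (2 ^ k) ^ (f x - f (fun i => x i + a i) - f (fun i => x i + b i) +
          f (fun i => x i + a i + b i)).val
        = (2 : ℂ) ^ (n + s)) := by
  set F : (Fin n → ZMod 2) → ℂ := fun x => ZMod.stdAddChar (f x) with hF
  have hgWHT : gWHT (2 ^ k) f = walshTransform F := by
    funext u
    simp only [gWHT, zetaQ_pow_val]
    rfl
  have hS (x : Fin n → ZMod 2) : ∑ a : Fin n → ZMod 2, ∑ b : Fin n → ZMod 2,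
        zetaQ (2 ^ k) ^ (f x - f (fun i => x i + a i) - f (fun i => x i + b i) +
          f (fun i => x i + a i + b i)).val
      = F x * ∑ a, ∑ b, conj (F (x + a)) * conj (F (x + b)) * F (x + a + b) := by
    show ∑ a, ∑ b, zetaQ (2 ^ k) ^ (f x - f (x + a) - f (x + b) + f (x + a + b)).val = _
    simp only [zetaQ_pow_val, mul_sum, hF, sub_eq_add_neg, AddChar.map_add_eq_mul,
      AddChar.map_neg_eq_conj]
    exact sum_congr rfl fun a _ => sum_congr rfl fun b _ => by ring
  simp only [hgWHT, norm_eq_zero_or_eq_iff_mul_conj_sq _ (Real.rpow_nonneg zero_le_two _),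
    ofReal_two_rpow_half_sq]
  rw [← funext_iff, ← walshTransform_injective.eq_iff, funext_iff]
  refine forall_congr' fun x => ?_
  rw [walshTransform_mul_conj_sq, walshTransform_const_mul, ← conj_walshTransform,
    walshTransform_walshTransform, hS, map_mul, map_pow, map_ofNat,
    mul_left_comm (2 ^ (n + s) : ℂ), mul_right_inj' (pow_ne_zero n two_ne_zero)]
  have hunit : F x * conj (F x) = 1 := by
    rw [hF, ← AddChar.map_neg_eq_conj, ← AddChar.map_add_eq_mul, add_neg_cancel,
      AddChar.map_zero_eq_one]
  constructor <;> intro h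
  · rw [h, mul_left_comm, hunit, mul_one]
  · rw [← h, mul_comm (F x), mul_assoc, hunit, mul_one]

/-- Theorem 11, first part: `f` is `s`-plateaued iff for all `x`,
`Σ_{a,b} ζ^{D_b D_a f(x)} = 2^{n+s}`. -/
theorem stmt14 (n k s : ℕ) (hn : 1 ≤ n) (hk : 2 ≤ k) (hs : s ≤ n)
    (f : (Fin n → ZMod 2) → ZMod (2 ^ k)) :
    (∀ u, ‖gWHT (2 ^ k) f u‖ = 0 ∨
      ‖gWHT (2 ^ k) f u‖ = (2 : ℝ) ^ (((n + s : ℕ) : ℝ) / 2)) ↔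
    (∀ x : Fin n → ZMod 2,
      ∑ a : Fin n → ZMod 2, ∑ b : Fin n → ZMod 2,
        zetaQ (2 ^ k) ^ (f x - f (fun i => x i + a i) - f (fun i => x i + b i) +
          f (fun i => x i + a i + b i)).val
        = (2 : ℂ) ^ (n + s)) :=
  stmt14_general n k s f
end
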